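/- Suppose g₂ : ℝ² → (0,∞) is C¹ and positive-valued, Λ₁ := sup_{t≥0}|ζ_d(t)| < ∞, and ψ₂ : [0,∞) → [0,∞) is a continuous non-decreasing function with max{ |∇g₂(ζ)| : |ζ| ≤ Λ₁ + s } ≤ ψ₂(s) for all s ≥ 0. Suppose further that L : [0,∞) → [1,∞) is continuous non-decreasing with |f̃(t,x) − f̃(t,ξ)| ≤ L(|x|+|ξ|)|x−ξ| and |f̃(t,ξ)| ≤ L(|ξ|)|ξ| for all t ≥ 0, x, ξ ∈ ℝ². Define M(s) := ((1+μ)² + L(s))·(1 + s·ψ₂(s)/min{ g₂(ζ) : |ζ| ≤ Λ₁ + s }). Then for all t ≥ 0 and all x, ξ ∈ ℝ²: g̃(t,x)·|k(t,x) − k(t,ξ)| ≤ M(|x| + |ξ|)·|ξ − x|. -/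

import Mathlib

open Set Filter

/- Write `a(x) := (1 + μ²)x₁ + 2μx₂ + f̃(t,x)`, so that `k = -a/g̃`. Then
`g̃(x)(k(ξ) - k(x)) = (a(x) - a(ξ)) - (g̃(x) - g̃(ξ)) a(ξ) / g̃(ξ)`. The numerator `a` is Lipschitz
with constant `(1 + μ)² + L(s)` on the relevant ball and `|a(ξ)| ≤ ((1 + μ)² + L(s)) s`, where
`s = |x| + |ξ|`; by the mean value inequality `g̃(t,·)` is `ψ₂(s)`-Lipschitz there, and `g̃(ξ)` is
bounded below by the minimum of `g₂` on the ball of radius `Λ₁ + s`, which contains `ζ_d(t) + ξ`. -/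

noncomputable def k14 (μ : ℝ) (ftil gtil : ℝ → EuclideanSpace ℝ (Fin 2) → ℝ)
    (t : ℝ) (x : EuclideanSpace ℝ (Fin 2)) : ℝ :=
  -(((1 + μ ^ 2) * x 0 + 2 * μ * x 1 + ftil t x) / gtil t x)

lemma abs_mul_div_sub_div_le {a b g g' C s ψ d m : ℝ} (hg : 0 < g) (hm : 0 < m) (hmg' : m ≤ g')
    (hab : |a - b| ≤ C * d) (hb : |b| ≤ C * s) (hgg' : |g - g'| ≤ ψ * d) :
    g * |a / g - b / g'| ≤ C * (1 + s * ψ / m) * d := by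
  have hg' : 0 < g' := hm.trans_le hmg'
  have hquot : |(g - g') * b / g'| ≤ ψ * d * (C * s) / m := by
    rw [abs_div, abs_mul, abs_of_pos hg']
    have hnum : |g - g'| * |b| ≤ ψ * d * (C * s) :=
      mul_le_mul hgg' hb (abs_nonneg _) ((abs_nonneg _).trans hgg')
    exact div_le_div₀ ((mul_nonneg (abs_nonneg _) (abs_nonneg _)).trans hnum) hnum hm hmg'
  calc g * |a / g - b / g'| = |(a - b) - (g - g') * b / g'| := by
        rw [← abs_of_pos hg, ← abs_mul, abs_of_pos hg]
        congr 1
        field_simp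
        ring
    _ ≤ C * d + ψ * d * (C * s) / m := (abs_sub _ _).trans (add_le_add hab hquot)
    _ = C * (1 + s * ψ / m) * d := by field_simp

lemma abs_comb_add_le {μ : ℝ} (hμ : 0 ≤ μ) (y : EuclideanSpace ℝ (Fin 2)) (c : ℝ) :
    |(1 + μ ^ 2) * y 0 + 2 * μ * y 1 + c| ≤ (1 + μ) ^ 2 * ‖y‖ + |c| := by
  have h0 : |y 0| ≤ ‖y‖ := PiLp.norm_apply_le y 0
  have h1 : |y 1| ≤ ‖y‖ := PiLp.norm_apply_le y 1
  calc |(1 + μ ^ 2) * y 0 + 2 * μ * y 1 + c|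
      ≤ (1 + μ ^ 2) * |y 0| + 2 * μ * |y 1| + |c| := by
        refine (abs_add_le _ _).trans (add_le_add_left ((abs_add_le _ _).trans_eq ?_) _)
        rw [abs_mul, abs_mul, abs_of_nonneg (by positivity : (0 : ℝ) ≤ 1 + μ ^ 2),
          abs_of_nonneg (by positivity : 0 ≤ 2 * μ)]
    _ ≤ (1 + μ) ^ 2 * ‖y‖ + |c| := by nlinarith

lemma abs_comb_add_sub_comb_add_le {μ : ℝ} (hμ : 0 ≤ μ) (x ξ : EuclideanSpace ℝ (Fin 2))
    (c c' : ℝ) :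
    |((1 + μ ^ 2) * x 0 + 2 * μ * x 1 + c) - ((1 + μ ^ 2) * ξ 0 + 2 * μ * ξ 1 + c')| ≤
      (1 + μ) ^ 2 * ‖x - ξ‖ + |c - c'| := by
  convert abs_comb_add_le hμ (x - ξ) (c - c') using 2
  simp only [PiLp.sub_apply]
  ring

lemma Convex.abs_image_sub_le_of_norm_gradient_le {F : Type*} [NormedAddCommGroup F]
    [InnerProductSpace ℝ F] [CompleteSpace F] {g : F → ℝ} (hg : Differentiable ℝ g) {s : Set F}
    (hs : Convex ℝ s) {C : ℝ} (bound : ∀ ζ ∈ s, ‖gradient g ζ‖ ≤ C) {x y : F} (hx : x ∈ s)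
    (hy : y ∈ s) : |g y - g x| ≤ C * ‖y - x‖ :=
  hs.norm_image_sub_le_of_norm_fderiv_le (fun ζ _ => hg ζ)
    (fun ζ hζ => by simpa [gradient] using bound ζ hζ) hx hy

lemma sInf_image_norm_le_pos {E : Type*} [NormedAddCommGroup E] [ProperSpace E] {g : E → ℝ}
    (hg : Continuous g) (hpos : ∀ ζ, 0 < g ζ) {R : ℝ} (hR : 0 ≤ R) :
    0 < sInf (g '' {ζ | ‖ζ‖ ≤ R}) := by
  have hball : {ζ : E | ‖ζ‖ ≤ R} = Metric.closedBall 0 R := by ext; simp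
  obtain ⟨ζ, -, hζ, -⟩ := (hball ▸ isCompact_closedBall (0 : E) R).exists_sInf_image_eq_and_le
    ⟨0, by simpa using hR⟩ hg.continuousOn
  exact hζ ▸ hpos ζ

theorem stmt_14_general (μ : ℝ) (hμ : 0 < μ)
    (g₂ : EuclideanSpace ℝ (Fin 2) → ℝ)
    (hg₂C1 : ContDiff ℝ 1 g₂) (hg₂pos : ∀ ζ, 0 < g₂ ζ)
    (ζd : ℝ → EuclideanSpace ℝ (Fin 2))
    (hζdbd : BddAbove ((fun t => ‖ζd t‖) '' Ici 0))
    (Λ₁ : ℝ) (hΛ₁ : Λ₁ = sSup ((fun t => ‖ζd t‖) '' Ici 0))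
    (ψ₂ : ℝ → ℝ)
    (hψ₂ : ∀ s ≥ (0:ℝ), ∀ ζ : EuclideanSpace ℝ (Fin 2), ‖ζ‖ ≤ Λ₁ + s →
      ‖gradient g₂ ζ‖ ≤ ψ₂ s)
    (ftil : ℝ → EuclideanSpace ℝ (Fin 2) → ℝ)
    (L : ℝ → ℝ) (hLm : Monotone L) (hL1 : ∀ s, 1 ≤ L s)
    (hLipf : ∀ t ≥ (0:ℝ), ∀ x ξ : EuclideanSpace ℝ (Fin 2),
      |ftil t x - ftil t ξ| ≤ L (‖x‖ + ‖ξ‖) * ‖x - ξ‖)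
    (hgrf : ∀ t ≥ (0:ℝ), ∀ ξ : EuclideanSpace ℝ (Fin 2), |ftil t ξ| ≤ L ‖ξ‖ * ‖ξ‖)
    (gtil : ℝ → EuclideanSpace ℝ (Fin 2) → ℝ)
    (hgtil : ∀ t x, gtil t x = g₂ (ζd t + x))
    (M : ℝ → ℝ)
    (hM : ∀ s, M s = ((1 + μ) ^ 2 + L s) *
      (1 + s * ψ₂ s / sInf (g₂ '' {ζ | ‖ζ‖ ≤ Λ₁ + s}))) :
    ∀ t ≥ (0:ℝ), ∀ x ξ : EuclideanSpace ℝ (Fin 2),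
      gtil t x * |k14 μ ftil gtil t x - k14 μ ftil gtil t ξ| ≤ M (‖x‖ + ‖ξ‖) * ‖ξ - x‖ := by
  intro t ht x ξ
  set s := ‖x‖ + ‖ξ‖
  have hs : 0 ≤ s := by positivity
  set K : Set (EuclideanSpace ℝ (Fin 2)) := {ζ | ‖ζ‖ ≤ Λ₁ + s}
  have hζd : ‖ζd t‖ ≤ Λ₁ := hΛ₁ ▸ le_csSup hζdbd ⟨t, ht, rfl⟩
  have hxK : ζd t + x ∈ K := (norm_add_le _ _).trans (by simp only [s]; linarith [norm_nonneg ξ])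
  have hξK : ζd t + ξ ∈ K := (norm_add_le _ _).trans (by simp only [s]; linarith [norm_nonneg x])
  have hm : 0 < sInf (g₂ '' K) := sInf_image_norm_le_pos hg₂C1.continuous hg₂pos
    (by linarith [(norm_nonneg _).trans hζd])
  have hmξ : sInf (g₂ '' K) ≤ g₂ (ζd t + ξ) :=
    csInf_le ⟨0, by rintro _ ⟨ζ, -, rfl⟩; exact (hg₂pos ζ).le⟩ ⟨_, hξK, rfl⟩
  have hK : Convex ℝ K := by
    simpa [K, Metric.closedBall] using convex_closedBall (0 : EuclideanSpace ℝ (Fin 2)) (Λ₁ + s)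
  have hg : |g₂ (ζd t + x) - g₂ (ζd t + ξ)| ≤ ψ₂ s * ‖x - ξ‖ := by
    simpa only [add_sub_add_left_eq_sub] using hK.abs_image_sub_le_of_norm_gradient_le
      (hg₂C1.differentiable one_ne_zero) (hψ₂ s hs) hξK hxK
  rw [hM, norm_sub_rev, k14, k14, hgtil, hgtil, neg_sub_neg, abs_sub_comm]
  refine abs_mul_div_sub_div_le (hg₂pos _) hm hmξ ?_ ?_ hg
  · linarith [abs_comb_add_sub_comb_add_le hμ.le x ξ (ftil t x) (ftil t ξ), hLipf t ht x ξ]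
  · have hξs : ‖ξ‖ ≤ s := le_add_of_nonneg_left (norm_nonneg x)
    have hf : |ftil t ξ| ≤ L s * ‖ξ‖ :=
      (hgrf t ht ξ).trans (mul_le_mul_of_nonneg_right (hLm hξs) (norm_nonneg ξ))
    calc _ ≤ (1 + μ) ^ 2 * ‖ξ‖ + |ftil t ξ| := abs_comb_add_le hμ.le _ _
      _ ≤ ((1 + μ) ^ 2 + L s) * ‖ξ‖ := by linarith
      _ ≤ _ := mul_le_mul_of_nonneg_left hξs (by linarith [hL1 s, sq_nonneg (1 + μ)])

theorem stmt_14 (μ : ℝ) (hμ : 0 < μ)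
    (g₂ : EuclideanSpace ℝ (Fin 2) → ℝ)
    (hg₂C1 : ContDiff ℝ 1 g₂) (hg₂pos : ∀ ζ, 0 < g₂ ζ)
    (ζd : ℝ → EuclideanSpace ℝ (Fin 2)) (hζdc : Continuous ζd)
    (hζdbd : BddAbove ((fun t => ‖ζd t‖) '' Ici 0))
    (Λ₁ : ℝ) (hΛ₁ : Λ₁ = sSup ((fun t => ‖ζd t‖) '' Ici 0))
    (ψ₂ : ℝ → ℝ) (hψ₂c : ContinuousOn ψ₂ (Ici 0)) (hψ₂m : MonotoneOn ψ₂ (Ici 0))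
    (hψ₂nn : ∀ s ≥ (0:ℝ), 0 ≤ ψ₂ s)
    (hψ₂ : ∀ s ≥ (0:ℝ), ∀ ζ : EuclideanSpace ℝ (Fin 2), ‖ζ‖ ≤ Λ₁ + s →
      ‖gradient g₂ ζ‖ ≤ ψ₂ s)
    (ftil : ℝ → EuclideanSpace ℝ (Fin 2) → ℝ)
    (L : ℝ → ℝ) (hLc : Continuous L) (hLm : Monotone L) (hL1 : ∀ s, 1 ≤ L s)
    (hLipf : ∀ t ≥ (0:ℝ), ∀ x ξ : EuclideanSpace ℝ (Fin 2),
      |ftil t x - ftil t ξ| ≤ L (‖x‖ + ‖ξ‖) * ‖x - ξ‖)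
    (hgrf : ∀ t ≥ (0:ℝ), ∀ ξ : EuclideanSpace ℝ (Fin 2), |ftil t ξ| ≤ L ‖ξ‖ * ‖ξ‖)
    (gtil : ℝ → EuclideanSpace ℝ (Fin 2) → ℝ)
    (hgtil : ∀ t x, gtil t x = g₂ (ζd t + x))
    (M : ℝ → ℝ)
    (hM : ∀ s, M s = ((1 + μ) ^ 2 + L s) *
      (1 + s * ψ₂ s / sInf (g₂ '' {ζ | ‖ζ‖ ≤ Λ₁ + s}))) :
    ∀ t ≥ (0:ℝ), ∀ x ξ : EuclideanSpace ℝ (Fin 2),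
      gtil t x * |k14 μ ftil gtil t x - k14 μ ftil gtil t ξ| ≤ M (‖x‖ + ‖ξ‖) * ‖ξ - x‖ :=
  stmt_14_general μ hμ g₂ hg₂C1 hg₂pos ζd hζdbd Λ₁ hΛ₁ ψ₂ hψ₂ ftil L hLm hL1 hLipf hgrf gtil hgtil M
    hM
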